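/- arXiv:1512.07290 — 4 statements merged into one kernel-verified Lean document; each statement's English description precedes it below -/
import Mathlib

section
/- Let N, M, K be positive integers with N < K and M < K. Let E2 be a fixed K×M complex matrix of full column rank (rank E2 = M). Then for almost every N×K complex matrix E1 (with respect to Lebesgue measure on the space of N×K complex matrices), the product E1·E2 has rank min(N, M). -/
/-!
Write `r = min N M`. The map `E1 ↦ E1 * E2` is linear and, since `E2` has full column rank,
surjective; a surjective linear map pulls Haar-null sets back to Haar-null sets, so it suffices
that almost every `N × M` matrix has an invertible leading `r × r` minor. That minor is a nonzero
polynomial in the entries (it equals `1` at the identity pattern), and the zero set of a nonzero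
polynomial is null by Fubini and induction on the number of variables: a nonzero polynomial in one
variable has finitely many roots.
-/

open MeasureTheory

namespace MvPolynomial

theorem measurable_eval {R σ : Type*} [CommSemiring R] [MeasurableSpace R] [MeasurableAdd₂ R]
    [MeasurableMul₂ R] (p : MvPolynomial σ R) :
    Measurable fun x : σ → R => eval x p := by
  induction p using MvPolynomial.induction_on with
  | C a => simp
  | add p q hp hq => simp only [map_add]; exact hp.add hq
  | mul_X p s hp => simp only [map_mul, eval_X]; exact hp.mul (measurable_pi_apply s)

variable {R : Type*} [CommRing R] [IsDomain R] [MeasurableSpace R] [MeasurableSingletonClass R]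
  [MeasurableAdd₂ R] [MeasurableMul₂ R] (μ : Measure R) [SigmaFinite μ]
  [NullSingletonClass μ]

theorem ae_eval_ne_zero_fin : ∀ {n : ℕ} {p : MvPolynomial (Fin n) R}, p ≠ 0 →
    ∀ᵐ x ∂Measure.pi fun _ => μ, eval x p ≠ 0
  | 0, p, hp => by
    obtain ⟨a, rfl⟩ := C_surjective (Fin 0) p
    exact .of_forall fun x => by simpa using hp
  | n + 1, p, hp => by
    let e := MeasurableEquiv.piFinSuccAbove (fun _ : Fin (n + 1) => R) 0
    have he : ∀ x y, e.symm (x, y) = Fin.cons x y := fun x y => by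
      simp [e, MeasurableEquiv.piFinSuccAbove_symm_apply]; rfl
    have hS : MeasurableSet {z | eval (e.symm z) p ≠ 0} :=
      ((measurable_eval p).comp e.symm.measurable (measurableSet_singleton 0)).compl
    set q := finSuccEquiv R n p
    have hq : q.leadingCoeff ≠ 0 := by simpa [q] using hp
    -- for a.e. `y`, `x ↦ p (x, y)` is a nonzero polynomial, so it vanishes at finitely many `x`
    have h_fiber :
        ∀ᵐ y ∂Measure.pi fun _ => μ, ∀ᵐ x ∂μ, eval (e.symm (x, y)) p ≠ 0 := by
      filter_upwards [ae_eval_ne_zero_fin hq] with y hy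
      have hqy : q.map (eval y) ≠ 0 := fun h => hy <| by
        simpa using congrArg (Polynomial.coeff · q.natDegree) h
      refine measure_mono_null (fun x hx => ?_)
        ((Polynomial.finite_setOfPred_isRoot hqy).measure_zero μ)
      simpa [he, eval_eq_eval_mv_eval'] using hx
    have h_prod : ∀ᵐ z ∂μ.prod (Measure.pi fun _ => μ), eval (e.symm z) p ≠ 0 :=
      (Measure.ae_prod_iff_ae_ae hS).2 ((Measure.ae_ae_comm hS).2 h_fiber)
    filter_upwards [(measurePreserving_piFinSuccAbove (fun _ => μ) 0).quasiMeasurePreserving.ae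
      h_prod] with x hx
    simpa [he, Fin.cons_self_tail] using hx

theorem ae_eval_ne_zero {σ : Type*} [Fintype σ] {p : MvPolynomial σ R} (hp : p ≠ 0) :
    ∀ᵐ x ∂Measure.pi fun _ : σ => μ, eval x p ≠ 0 := by
  let e := Fintype.equivFin σ
  have hp' : rename e p ≠ 0 := fun h => hp (rename_injective e e.injective (by simpa using h))
  filter_upwards [(measurePreserving_piCongrLeft (fun _ => μ) e).quasiMeasurePreserving.ae
    (ae_eval_ne_zero_fin μ hp')] with x hx
  have : MeasurableEquiv.piCongrLeft (fun _ => R) e x = x ∘ e.symm := by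
    ext i; simp [MeasurableEquiv.coe_piCongrLeft, Equiv.piCongrLeft_apply_eq_cast]
  simpa [this, eval_rename, Function.comp_assoc] using hx

end MvPolynomial

namespace Matrix

section Measure

variable {R : Type*} [CommRing R] [IsDomain R] [MeasurableSpace R] [MeasurableSingletonClass R]
  [MeasurableAdd₂ R] [MeasurableMul₂ R] (μ : Measure R) [SigmaFinite μ]
  [NullSingletonClass μ]

theorem ae_det_submatrix_ne_zero {m n ι : Type*} [Fintype m] [Fintype n] [Fintype ι]
    [DecidableEq ι] {e : ι → m} {f : ι → n} (he : e.Injective) (hf : f.Injective) :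
    ∀ᵐ x ∂Measure.pi fun _ : m × n => μ,
      ((of fun i j => x (i, j)).submatrix e f).det ≠ 0 := by
  let P : MvPolynomial (m × n) R := ((of fun i j => MvPolynomial.X (i, j)).submatrix e f).det
  have h_eval : ∀ x, MvPolynomial.eval x P = ((of fun i j => x (i, j)).submatrix e f).det := by
    intro x
    rw [RingHom.map_det]
    congr 1
    ext i j
    simp
  -- the indicator of the diagonal `{(e i, f i)}` has the identity as its `(e, f)`-submatrix
  have hP : P ≠ 0 := by
    intro h
    have h_one : (of fun i j => (Set.range fun k => (e k, f k)).indicator 1 (i, j)).submatrix e f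
        = (1 : Matrix ι ι R) := by
      ext i j
      simp [one_apply, Set.indicator, he.eq_iff, hf.eq_iff]
    simpa [h, h_one] using h_eval ((Set.range fun k => (e k, f k)).indicator 1)
  filter_upwards [MvPolynomial.ae_eval_ne_zero μ hP] with x hx
  rwa [← h_eval]

end Measure

section Field

variable {K : Type*} [Field K]

theorem rank_eq_min_of_det_submatrix_castLE_ne_zero {N M : ℕ} (A : Matrix (Fin N) (Fin M) K)
    (h : (A.submatrix (Fin.castLE (min_le_left N M)) (Fin.castLE (min_le_right N M))).det ≠ 0) :
    A.rank = min N M := by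
  refine le_antisymm (le_min A.rank_le_height A.rank_le_width) ?_
  calc min N M
      = (A.submatrix (Fin.castLE (min_le_left N M)) (Fin.castLE (min_le_right N M))).rank := by
        rw [rank_of_isUnit _ ((isUnit_iff_isUnit_det _).2 h.isUnit), Fintype.card_fin]
    _ ≤ A.rank := rank_submatrix_le _ _ _

theorem mul_right_surjective_of_rank_eq_card {l m n : Type*} [Fintype m] [Fintype n]
    (E : Matrix m n K) (h : E.rank = Fintype.card n) :
    Function.Surjective fun X : Matrix l m K => X * E := by
  have hEt : Function.Surjective Eᵀ.mulVecLin := by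
    rw [← LinearMap.range_eq_top]
    apply Submodule.eq_top_of_finrank_eq
    rw [← rank, rank_transpose, h, Module.finrank_fintype_fun_eq_card]
  intro Y
  choose X hX using fun i => hEt (Y i)
  refine ⟨of X, funext fun i => ?_⟩
  rw [← hX i, mulVecLin_apply, mulVec_transpose]
  rfl

end Field

end Matrix

theorem stmt_0_general (N M K : ℕ) (E2 : Matrix (Fin K) (Fin M) ℂ) (hE2 : E2.rank = M) :
    ∀ᵐ f : Fin N → Fin K → ℂ ∂volume, (Matrix.of f * E2).rank = min N M := by
  let L : (Fin N → Fin K → ℂ) →ₗ[ℂ] (Fin N × Fin M → ℂ) :=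
    (LinearEquiv.curry ℂ ℂ (Fin N) (Fin M)).symm.toLinearMap ∘ₗ
      mulRightLinearMap (Fin N) ℂ E2
  have hL : Function.Surjective L :=
    (LinearEquiv.curry ℂ ℂ (Fin N) (Fin M)).symm.surjective.comp
      (Matrix.mul_right_surjective_of_rank_eq_card (l := Fin N) E2 (by rwa [Fintype.card_fin]))
  -- instance search does not find this for iterated `pi` measures
  have : (volume : Measure (Fin N → Fin K → ℂ)).IsAddHaarMeasure :=
    Measure.pi.isAddHaarMeasure _
  let ρ := Fin.castLE (min_le_left N M)
  let γ := Fin.castLE (min_le_right N M)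
  have hs : MeasurableSet
      {x : Fin N × Fin M → ℂ | ((Matrix.of fun i j => x (i, j)).submatrix ρ γ).det ≠ 0} :=
    (isOpen_ne_fun (by fun_prop) continuous_const).measurableSet
  filter_upwards [(ae_comp_linearMap_mem_iff L volume volume hL hs).2
    (Matrix.ae_det_submatrix_ne_zero volume (Fin.castLE_injective _) (Fin.castLE_injective _))]
    with f hf
  exact Matrix.rank_eq_min_of_det_submatrix_castLE_ne_zero _ hf

/-- For fixed `E2 : K × M` of full column rank, almost every `N × K` complex matrix `E1`
satisfies `rank (E1 * E2) = min N M`. -/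
theorem stmt_0 (N M K : ℕ) (hN : 0 < N) (hM : 0 < M) (hNK : N < K) (hMK : M < K)
    (E2 : Matrix (Fin K) (Fin M) ℂ) (hE2 : E2.rank = M) :
    ∀ᵐ f : Fin N → Fin K → ℂ ∂volume, (Matrix.of f * E2).rank = min N M :=
  stmt_0_general N M K E2 hE2
end

section
/- Let n ≥ 1. For almost every z ∈ ℂⁿ (with respect to Lebesgue measure on ℂⁿ) and for every ε > 0, the set of pairs (p, q) with p ∈ ℤ and q ∈ ℤⁿ, q ≠ 0, satisfying |p + z·q| ≤ (‖q‖∞)^{−(n−1+ε)/2} is finite; that is, the inequality |p + z·q| > (‖q‖∞)^{−(n−1+ε)/2} holds for all such pairs except finitely many. -/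
/-!
Borel–Cantelli. Fix a box `‖z j‖ ≤ R` and `q ≠ 0`, and pick `i` with `|q i| = ‖q‖∞`. Slicing in
the coordinate `z i`, the points of the box with `|p + z·q| ≤ δ` have volume at most
`π (δ / ‖q‖∞)² (π R²)^(n-1)`, and only `O(R ‖q‖∞)` integers `p` give a nonempty set. For
`δ = ‖q‖∞ ^ (-(n - 1 + ε) / 2)` the sum over `p` is `O(‖q‖∞ ^ (-(n + ε)))`, which is summable over
`ℤⁿ`. Letting `ε = 1 / (k + 1)` and `R ∈ ℕ` vary gives countably many null sets.
-/
open MeasureTheory Metric Finset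
open scoped ENNReal

section Slab

variable {ι : Type*} [Fintype ι]

def boxSlab (R δ : ℝ) (c : ℂ) (w : ι → ℂ) : Set (ι → ℂ) :=
  {z | (∀ j, ‖z j‖ ≤ R) ∧ ‖c + ∑ j, z j * w j‖ ≤ δ}

variable {R δ : ℝ} {c : ℂ} {w : ι → ℂ}

lemma measurableSet_boxSlab : MeasurableSet (boxSlab R δ c w) := by
  simp only [boxSlab, Set.ofPred_and, Set.ofPred_forall]
  exact (MeasurableSet.iInter fun j => measurableSet_le (by fun_prop) measurable_const).inter
    (measurableSet_le (by fun_prop) measurable_const)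

lemma norm_le_of_mem_boxSlab {z : ι → ℂ} (hz : z ∈ boxSlab R δ c w) :
    ‖c‖ ≤ δ + R * ∑ j, ‖w j‖ := by
  have hdot : ‖∑ j, z j * w j‖ ≤ R * ∑ j, ‖w j‖ := by
    rw [mul_sum]
    refine (norm_sum_le _ _).trans (sum_le_sum fun j _ => ?_)
    rw [norm_mul]
    exact mul_le_mul_of_nonneg_right (hz.1 j) (norm_nonneg _)
  calc ‖c‖ = ‖(c + ∑ j, z j * w j) - ∑ j, z j * w j‖ := by rw [add_sub_cancel_right]
    _ ≤ ‖c + ∑ j, z j * w j‖ + ‖∑ j, z j * w j‖ := norm_sub_le _ _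
    _ ≤ δ + R * ∑ j, ‖w j‖ := add_le_add hz.2 hdot

lemma mem_closedBall_of_update_mem_boxSlab [DecidableEq ι] {x : ι → ℂ} {i : ι} (hw : w i ≠ 0)
    {y : ℂ} (h : Function.update x i y ∈ boxSlab R δ c w) :
    y ∈ closedBall (-(c + ∑ j ∈ univ.erase i, x j * w j) / w i) (δ / ‖w i‖) := by
  have hsum : ∑ j, Function.update x i y j * w j = y * w i + ∑ j ∈ univ.erase i, x j * w j := by
    rw [← add_sum_erase _ _ (mem_univ i), Function.update_self]
    congr 1
    exact sum_congr rfl fun j hj => by rw [Function.update_of_ne (ne_of_mem_erase hj)]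
  have h2 := h.2
  rw [hsum] at h2
  have hshift : (y - -(c + ∑ j ∈ univ.erase i, x j * w j) / w i) * w i =
      c + (y * w i + ∑ j ∈ univ.erase i, x j * w j) := by
    field_simp
    ring
  rwa [mem_closedBall, dist_eq_norm, le_div_iff₀ (norm_pos_iff.2 hw), ← norm_mul, hshift]

lemma volume_boxSlab_le {i : ι} (hw : w i ≠ 0) :
    volume (boxSlab R δ c w) ≤
      volume (closedBall (0 : ℂ) (δ / ‖w i‖)) *
        volume (closedBall (0 : ℂ) R) ^ (Fintype.card ι - 1) := by
  classical
  -- Fubini in the coordinate `i`: every slice is a disc of radius `δ / ‖w i‖`.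
  set G : Set (ι → ℂ) :=
    Set.univ.pi (Function.update (fun _ => closedBall (0 : ℂ) R) i (closedBall 0 (δ / ‖w i‖)))
  have hG : MeasurableSet G := MeasurableSet.univ_pi fun j => by
    rcases eq_or_ne j i with rfl | hj
    · simpa using measurableSet_closedBall
    · simpa [hj] using measurableSet_closedBall
  have hslice : ∀ x : ι → ℂ, ∫⁻ y, (boxSlab R δ c w).indicator 1 (Function.update x i y)
      ≤ ∫⁻ y, G.indicator 1 (Function.update x i y) := by
    intro x
    have hvol : ∀ s : Set (ι → ℂ), MeasurableSet s →
        ∫⁻ y, s.indicator 1 (Function.update x i y) = volume (Function.update x i ⁻¹' s) :=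
      fun s hs => lintegral_indicator_one (measurable_update x hs)
    rw [hvol _ measurableSet_boxSlab, hvol _ hG]
    by_cases hx : ∀ j ≠ i, ‖x j‖ ≤ R
    · rw [Set.update_preimage_univ_pi fun j hj => by simpa [hj] using hx j hj,
        Function.update_self,
        ← Measure.addHaar_closedBall_center volume (-(c + ∑ j ∈ univ.erase i, x j * w j) / w i)]
      exact measure_mono fun y hy => mem_closedBall_of_update_mem_boxSlab hw hy
    · have hempty : Function.update x i ⁻¹' boxSlab R δ c w = ∅ :=
        Set.eq_empty_of_forall_notMem fun y hy => hx fun j hj => by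
          simpa [Function.update_of_ne hj] using hy.1 j
      rw [hempty, measure_empty]
      exact zero_le
  calc volume (boxSlab R δ c w) ≤ volume G := by
        rw [← lintegral_indicator_one measurableSet_boxSlab, ← lintegral_indicator_one hG,
          volume_pi]
        refine lintegral_le_of_lmarginal_le {i} (measurable_one.indicator measurableSet_boxSlab)
          (measurable_one.indicator hG) fun x => ?_
        simpa only [lmarginal_singleton] using hslice x
    _ = _ := by
        rw [volume_pi_pi, prod_congr rfl fun j _ =>
          Function.apply_update (fun _ (s : Set ℂ) => volume s) _ i _ j,
          prod_update_of_mem (mem_univ i), prod_const, card_univ_sdiff, card_singleton]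

end Slab

section IntegerVectors

variable {ι : Type*} [Fintype ι]

lemma Pi.norm_int_eq_sup_natAbs (q : ι → ℤ) :
    ‖q‖ = ((univ.sup fun i => (q i).natAbs : ℕ) : ℝ) := by
  rw [Pi.norm_def, ← NNReal.coe_natCast, Nat.cast_finsetSup]
  simp only [NNReal.natCast_natAbs]

lemma Pi.exists_norm_int_eq_norm {q : ι → ℤ} (hq : q ≠ 0) : ∃ i, ‖q i‖ = ‖q‖ := by
  obtain ⟨j, -⟩ := Function.ne_iff.mp hq
  obtain ⟨i, -, hi⟩ := exists_mem_eq_sup univ ⟨j, mem_univ j⟩ fun i => ‖q i‖₊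
  exact ⟨i, by rw [Pi.norm_def, hi, coe_nnnorm]⟩

lemma Pi.one_le_norm_int {q : ι → ℤ} (hq : q ≠ 0) : 1 ≤ ‖q‖ := by
  obtain ⟨j, hj⟩ := Function.ne_iff.mp hq
  calc (1 : ℝ) ≤ ‖q j‖ := by rw [Int.norm_eq_abs]; exact_mod_cast Int.one_le_abs hj
    _ ≤ ‖q‖ := norm_le_pi_norm q j

lemma Pi.summable_norm_int_rpow {r : ℝ} (hr : r < -Fintype.card ι) :
    Summable fun q : ι → ℤ => ‖q‖ ^ r := by
  classical
  set b := (Pi.basisFun ℝ ι).restrictScalars ℤ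
  have hL := ZLattice.summable_norm_rpow (Submodule.span ℤ (Set.range (Pi.basisFun ℝ ι))) r
    (by rwa [Module.finrank_eq_card_basis b])
  refine (hL.comp_injective b.equivFun.symm.injective).congr fun q => ?_
  have hcoe : ((b.equivFun.symm q : _) : ι → ℝ) = fun i => (q i : ℝ) := by
    ext i
    simp [b, Module.Basis.equivFun_symm_apply, Pi.single_apply]
  simp only [Function.comp_apply, Submodule.coe_norm, hcoe, Pi.norm_def]
  rfl

variable {R δ : ℝ}

lemma abs_le_of_mem_boxSlab_int (hR : 0 ≤ R) (hδ : δ ≤ 1) {p : ℤ} {q : ι → ℤ} {z : ι → ℂ}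
    (hz : z ∈ boxSlab R δ p (fun j => q j)) :
    |(p : ℝ)| ≤ Fintype.card ι * R * ‖q‖ + 1 := by
  have hq : ∑ j, ‖(q j : ℂ)‖ ≤ Fintype.card ι * ‖q‖ := by
    simpa only [Complex.norm_intCast, ← Int.norm_eq_abs, nsmul_eq_mul, card_univ] using
      sum_le_card_nsmul univ _ _ fun j _ => norm_le_pi_norm q j
  calc |(p : ℝ)| = ‖(p : ℂ)‖ := (Complex.norm_intCast p).symm
    _ ≤ δ + R * ∑ j, ‖(q j : ℂ)‖ := norm_le_of_mem_boxSlab hz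
    _ ≤ 1 + R * (Fintype.card ι * ‖q‖) := by gcongr
    _ = Fintype.card ι * R * ‖q‖ + 1 := by ring

lemma tsum_volume_boxSlab_int_le (hR : 0 ≤ R) (hδ₀ : 0 ≤ δ) (hδ₁ : δ ≤ 1) {q : ι → ℤ}
    (hq : q ≠ 0) :
    ∑' p : ℤ, volume (boxSlab R δ p (fun j => q j)) ≤
      ENNReal.ofReal ((2 * Fintype.card ι * R + 5) * (δ ^ 2 / ‖q‖)) * NNReal.pi *
        volume (closedBall (0 : ℂ) R) ^ (Fintype.card ι - 1) := by
  obtain ⟨i, hi⟩ := Pi.exists_norm_int_eq_norm hq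
  have hQ := Pi.one_le_norm_int hq
  set M : ℕ := ⌈Fintype.card ι * R * ‖q‖ + 1⌉₊
  have hvanish : ∀ p ∉ Icc (-(M : ℤ)) M, volume (boxSlab R δ p (fun j => q j)) = 0 := by
    intro p hp
    refine measure_eq_zero_iff_ae_notMem.2 (Filter.Eventually.of_forall fun z hz => hp ?_)
    rw [mem_Icc, ← abs_le, ← Int.cast_le (R := ℝ), Int.cast_abs, Int.cast_natCast]
    exact (abs_le_of_mem_boxSlab_int hR hδ₁ hz).trans (Nat.le_ceil _)
  have hcard : (#(Icc (-(M : ℤ)) M) : ℝ) ≤ (2 * Fintype.card ι * R + 5) * ‖q‖ := by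
    have : #(Icc (-(M : ℤ)) M) = 2 * M + 1 := by simp [Int.card_Icc]; omega
    rw [this]
    push_cast
    nlinarith [Nat.ceil_lt_add_one (show 0 ≤ Fintype.card ι * R * ‖q‖ + 1 by positivity)]
  have hqi : ((q i : ℤ) : ℂ) ≠ 0 := by
    rw [← norm_ne_zero_iff, Complex.norm_intCast, ← Int.norm_eq_abs, hi]
    positivity
  calc ∑' p : ℤ, volume (boxSlab R δ p (fun j => q j))
      = ∑ p ∈ Icc (-(M : ℤ)) M, volume (boxSlab R δ p (fun j => q j)) := tsum_eq_sum hvanish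
    _ ≤ #(Icc (-(M : ℤ)) M) • (volume (closedBall (0 : ℂ) (δ / ‖q‖)) *
        volume (closedBall (0 : ℂ) R) ^ (Fintype.card ι - 1)) := by
      refine sum_le_card_nsmul _ _ _ fun p _ => ?_
      simpa [Complex.norm_intCast, ← Int.norm_eq_abs, hi] using
        volume_boxSlab_le (R := R) (δ := δ) (c := p) (w := fun j => (q j : ℂ)) hqi
    _ ≤ _ := by
      rw [Complex.volume_closedBall, nsmul_eq_mul, ← mul_assoc, ← mul_assoc,
        ← ENNReal.ofReal_pow (by positivity), ← ENNReal.ofReal_natCast,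
        ← ENNReal.ofReal_mul (by positivity)]
      gcongr ENNReal.ofReal ?_ * _ * _
      calc (#(Icc (-(M : ℤ)) M) : ℝ) * (δ / ‖q‖) ^ 2
          ≤ (2 * Fintype.card ι * R + 5) * ‖q‖ * (δ / ‖q‖) ^ 2 := by gcongr
        _ = (2 * Fintype.card ι * R + 5) * (δ ^ 2 / ‖q‖) := by field_simp

lemma tsum_volume_boxSlab_rpow_ne_top (hR : 0 ≤ R) {τ : ℝ} (hτ₀ : 0 ≤ τ)
    (hτ : Fintype.card ι < 2 * τ + 1) :
    ∑' pq : ℤ × (ι → ℤ),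
      volume {z | pq.2 ≠ 0 ∧ z ∈ boxSlab R (‖pq.2‖ ^ (-τ)) pq.1 (fun j => pq.2 j)} ≠ ∞ := by
  set K : ℝ := 2 * Fintype.card ι * R + 5
  have hperq : ∀ q : ι → ℤ,
      ∑' p : ℤ, volume {z | q ≠ 0 ∧ z ∈ boxSlab R (‖q‖ ^ (-τ)) p (fun j => q j)} ≤
        ENNReal.ofReal (K * ‖q‖ ^ (-(2 * τ + 1))) * NNReal.pi *
          volume (closedBall (0 : ℂ) R) ^ (Fintype.card ι - 1) := by
    intro q
    rcases eq_or_ne q 0 with rfl | hq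
    · simp
    have hQ := Pi.one_le_norm_int hq
    have hpow : (‖q‖ ^ (-τ)) ^ 2 / ‖q‖ = ‖q‖ ^ (-(2 * τ + 1)) := by
      rw [← Real.rpow_natCast, ← Real.rpow_mul (by positivity),
        ← Real.rpow_sub_one (by positivity)]
      ring_nf
    simpa only [hq, ne_eq, not_false_eq_true, true_and, Set.ofPred_mem_eq, hpow] using
      tsum_volume_boxSlab_int_le hR (by positivity)
        (Real.rpow_le_one_of_one_le_of_nonpos hQ (neg_nonpos.2 hτ₀)) hq
  have hsum : Summable fun q : ι → ℤ => K * ‖q‖ ^ (-(2 * τ + 1)) :=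
    (Pi.summable_norm_int_rpow (by linarith)).mul_left K
  rw [ENNReal.tsum_prod (f := fun (p : ℤ) (q : ι → ℤ) =>
    volume {z | q ≠ 0 ∧ z ∈ boxSlab R (‖q‖ ^ (-τ)) p (fun j => q j)}), ENNReal.tsum_comm]
  refine ne_top_of_le_ne_top ?_ (ENNReal.tsum_le_tsum hperq)
  rw [ENNReal.tsum_mul_right, ENNReal.tsum_mul_right,
    ← ENNReal.ofReal_tsum_of_nonneg (fun q => by positivity) hsum]
  exact ENNReal.mul_ne_top (by finiteness) (ENNReal.pow_ne_top measure_closedBall_lt_top.ne)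

end IntegerVectors

/-- For almost every `z ∈ ℂⁿ` and every `ε > 0`, only finitely many pairs
`(p, q) ∈ ℤ × ℤⁿ` with `q ≠ 0` satisfy `|p + z·q| ≤ ‖q‖∞ ^ (-(n - 1 + ε)/2)`. -/
theorem stmt_5 (n : ℕ) (hn : 1 ≤ n) :
    ∀ᵐ z : Fin n → ℂ ∂volume, ∀ ε : ℝ, 0 < ε →
      {pq : ℤ × (Fin n → ℤ) | pq.2 ≠ 0 ∧
        ‖(pq.1 : ℂ) + ∑ i, z i * (pq.2 i : ℂ)‖ ≤
          ((Finset.univ.sup fun i => (pq.2 i).natAbs : ℕ) : ℝ) ^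
            (-(((n : ℝ) - 1 + ε) / 2))}.Finite := by
  have hn' : (1 : ℝ) ≤ n := by exact_mod_cast hn
  have hae : ∀ᵐ z : Fin n → ℂ, ∀ k R : ℕ, {pq : ℤ × (Fin n → ℤ) | pq.2 ≠ 0 ∧
      z ∈ boxSlab R (‖pq.2‖ ^ (-(((n : ℝ) - 1 + 1 / (k + 1)) / 2))) pq.1
        (fun j => pq.2 j)}.Finite :=
    ae_all_iff.2 fun k => ae_all_iff.2 fun R => ae_finite_setOfPred_mem <|
      tsum_volume_boxSlab_rpow_ne_top R.cast_nonneg (by positivity)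
        (by rw [Fintype.card_fin]; linarith [Nat.one_div_pos_of_nat (α := ℝ) (n := k)])
  filter_upwards [hae] with z hz ε hε
  obtain ⟨k, hk⟩ := exists_nat_one_div_lt hε
  refine (hz k ⌈∑ j, ‖z j‖⌉₊).subset ?_
  rintro ⟨p, q⟩ ⟨hq, hpq⟩
  refine ⟨hq, ⟨fun j => ?_, hpq.trans ?_⟩⟩
  · exact (single_le_sum (fun j _ => norm_nonneg (z j)) (mem_univ j)).trans (Nat.le_ceil _)
  · rw [← Pi.norm_int_eq_sup_natAbs]
    exact Real.rpow_le_rpow_of_exponent_le (Pi.one_le_norm_int hq) (by linarith)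
end

section
/- Let N ≥ p ≥ 1, let Ψ2 be an N×p complex matrix whose columns are orthonormal (Ψ2ᴴ·Ψ2 = I_p), and let Ω be a p×p Hermitian positive definite complex matrix. Then for P > 0 the determinant det(I_N + (P/p)·Ψ2·Ω·Ψ2ᴴ) is a positive real number, and the ratio log det(I_N + (P/p)·Ψ2·Ω·Ψ2ᴴ) / log P tends to p as P → ∞. -/
open Matrix Filter
open scoped ComplexOrder

/-! By Sylvester's identity `det (1 + A B) = det (1 + B A)` and `Ψ2ᴴ Ψ2 = 1`, the determinant
equals `det (1 + (P/p) Ω) = ∏ i, (1 + P λᵢ / p)` for the eigenvalues `λᵢ > 0` of `Ω`. Each factor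
is `P · (λᵢ / p + 1/P)`, so its logarithm is `log P + O(1)`, and the `p` factors give the limit. -/

theorem Matrix.det_one_add_smul_mul_mul_of_mul_eq_one {m n R : Type*} [Fintype m] [Fintype n]
    [DecidableEq m] [DecidableEq n] [CommRing R]
    (A : Matrix m n R) (B : Matrix n n R) (C : Matrix n m R) (hCA : C * A = 1) (c : R) :
    (1 + c • (A * B * C)).det = (1 + c • B).det := by
  rw [Matrix.mul_assoc, ← Matrix.mul_smul, det_one_add_mul_comm, Matrix.smul_mul,
    Matrix.mul_assoc, hCA, Matrix.mul_one]

theorem Matrix.IsHermitian.det_one_add_smul {n 𝕜 : Type*} [Fintype n] [DecidableEq n] [RCLike 𝕜]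
    {A : Matrix n n 𝕜} (hA : A.IsHermitian) (c : 𝕜) :
    (1 + c • A).det = ∏ i, (1 + c * hA.eigenvalues i) := by
  conv_lhs =>
    rw [hA.spectral_theorem, ← map_one (Unitary.conjStarAlgAut 𝕜 _ hA.eigenvectorUnitary),
      ← map_smul, ← map_add]
  rw [Unitary.conjStarAlgAut_apply, det_mul_right_comm,
    Unitary.mul_star_self_of_mem hA.eigenvectorUnitary.2, Matrix.one_mul, ← diagonal_one,
    ← diagonal_smul, diagonal_add, det_diagonal]
  rfl

theorem Real.tendsto_log_one_add_mul_div_log {a : ℝ} (ha : 0 < a) :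
    Tendsto (fun x => Real.log (1 + x * a) / Real.log x) atTop (nhds 1) := by
  have hlim : Tendsto (fun x => Real.log (x⁻¹ + a)) atTop (nhds (Real.log a)) := by
    simpa using (tendsto_inv_atTop_zero.add_const a).log (by simpa using ha.ne')
  have := (hlim.div_atTop Real.tendsto_log_atTop).const_add 1
  rw [add_zero] at this
  refine this.congr' ?_
  filter_upwards [eventually_gt_atTop 1] with x hx
  have hx0 : 0 < x := one_pos.trans hx
  rw [show 1 + x * a = x * (x⁻¹ + a) by field_simp, Real.log_mul hx0.ne' (by positivity),
    add_div, div_self (Real.log_pos hx).ne']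

theorem Real.tendsto_log_prod_one_add_mul_div_log {ι : Type*} [Fintype ι] {a : ι → ℝ}
    (ha : ∀ i, 0 < a i) :
    Tendsto (fun x => Real.log (∏ i, (1 + x * a i)) / Real.log x) atTop
      (nhds (Fintype.card ι)) := by
  have hsum := tendsto_finsetSum Finset.univ fun i _ => tendsto_log_one_add_mul_div_log (ha i)
  rw [Finset.sum_const, Finset.card_univ, nsmul_one] at hsum
  refine hsum.congr' ?_
  filter_upwards [eventually_gt_atTop 0] with x hx
  rw [Real.log_prod fun i _ => by have := ha i; positivity, Finset.sum_div]

theorem stmt_8_general (N p : ℕ)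
    (Ψ2 : Matrix (Fin N) (Fin p) ℂ) (hΨ2 : Ψ2ᴴ * Ψ2 = 1)
    (Ω : Matrix (Fin p) (Fin p) ℂ) (hΩ : Ω.PosDef) :
    (∀ P : ℝ, 0 < P →
      ((1 + ((P / p : ℝ) : ℂ) • (Ψ2 * Ω * Ψ2ᴴ)).det.im = 0 ∧
        0 < (1 + ((P / p : ℝ) : ℂ) • (Ψ2 * Ω * Ψ2ᴴ)).det.re)) ∧
    Tendsto (fun P : ℝ =>
        Real.log ((1 + ((P / p : ℝ) : ℂ) • (Ψ2 * Ω * Ψ2ᴴ)).det.re) / Real.log P)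
      atTop (nhds (p : ℝ)) := by
  set a : Fin p → ℝ := fun i => hΩ.1.eigenvalues i / p
  have ha : ∀ i, 0 < a i := fun i => div_pos (hΩ.eigenvalues_pos i) (by exact_mod_cast i.pos)
  have hdet : ∀ P : ℝ, (1 + ((P / p : ℝ) : ℂ) • (Ψ2 * Ω * Ψ2ᴴ)).det
      = ((∏ i, (1 + P * a i) : ℝ) : ℂ) := fun P => by
    rw [det_one_add_smul_mul_mul_of_mul_eq_one _ _ _ hΨ2, hΩ.1.det_one_add_smul]
    push_cast [a, RCLike.ofReal_eq_complex_ofReal]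
    exact Finset.prod_congr rfl fun i _ => by ring
  refine ⟨fun P hP => ?_, ?_⟩
  · rw [hdet, Complex.ofReal_im, Complex.ofReal_re]
    exact ⟨rfl, Finset.prod_pos fun i _ => by have := ha i; positivity⟩
  · simp only [hdet, Complex.ofReal_re]
    simpa using Real.tendsto_log_prod_one_add_mul_div_log ha

/-- For `Ψ2` an `N × p` complex matrix with orthonormal columns and `Ω` Hermitian positive
definite, `det (I_N + (P/p) • Ψ2 Ω Ψ2ᴴ)` is a positive real number for every `P > 0`, and
`log det (I_N + (P/p) • Ψ2 Ω Ψ2ᴴ) / log P → p` as `P → ∞`. -/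
theorem stmt_8 (N p : ℕ) (hp : 1 ≤ p) (hpN : p ≤ N)
    (Ψ2 : Matrix (Fin N) (Fin p) ℂ) (hΨ2 : Ψ2ᴴ * Ψ2 = 1)
    (Ω : Matrix (Fin p) (Fin p) ℂ) (hΩ : Ω.PosDef) :
    (∀ P : ℝ, 0 < P →
      ((1 + ((P / p : ℝ) : ℂ) • (Ψ2 * Ω * Ψ2ᴴ)).det.im = 0 ∧
        0 < (1 + ((P / p : ℝ) : ℂ) • (Ψ2 * Ω * Ψ2ᴴ)).det.re)) ∧
    Tendsto (fun P : ℝ =>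
        Real.log ((1 + ((P / p : ℝ) : ℂ) • (Ψ2 * Ω * Ψ2ᴴ)).det.re) / Real.log P)
      atTop (nhds (p : ℝ)) :=
  stmt_8_general N p Ψ2 hΨ2 Ω hΩ
end

section
/- Let f1, f2 ∈ ℂ with f1 ≠ 0, let a > 0, let Q ≥ 1 be an integer, let ε > 0, and let 0 < κ ≤ 1. Suppose that for all p, q ∈ ℤ with q ≠ 0 one has |p + (f2/f1)·q| > κ·|q|^{−ε/2}. Then for all integers u, v with |u| ≤ 2Q, |v| ≤ 2Q, and (u, v) ≠ (0, 0), the distance satisfies |a·f1·u + a·f2·v| ≥ κ·a·|f1|·(2Q)^{−ε/2}. In particular, the minimum distance of the constellation {f1·U + f2·V : U, V ∈ a·{−Q, …, Q}} is at least κ·a·|f1|·(2Q)^{−ε/2}. -/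
/-!
Factoring out `a f1` turns the difference `a f1 u + a f2 v` into `a f1 (u + (f2/f1) v)`, and the
Diophantine hypothesis bounds `‖u + (f2/f1) v‖` below by `κ |v|^(-ε/2) ≥ κ (2Q)^(-ε/2)`.
-/

lemma norm_mul_add_mul_eq_norm_mul_norm_add_div_mul {𝕜 : Type*} [NormedField 𝕜] {x : 𝕜}
    (hx : x ≠ 0) (y p q : 𝕜) : ‖x * p + y * q‖ = ‖x‖ * ‖p + y / x * q‖ := by
  rw [← norm_mul, mul_add, ← mul_assoc, mul_div_cancel₀ _ hx]

lemma rpow_neg_le_abs_intCast_rpow_neg {n : ℤ} (hn : n ≠ 0) {N s : ℝ} (hnN : |(n : ℝ)| ≤ N)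
    (hs : 0 ≤ s) : N ^ (-s) ≤ |(n : ℝ)| ^ (-s) :=
  Real.rpow_le_rpow_of_nonpos (by positivity) hnN (neg_nonpos.mpr hs)

/-- For `q = 0` the hypothesis `h` says nothing; there `‖p‖ ≥ 1 ≥ κ N^(-s)` instead. -/
lemma mul_rpow_neg_le_norm_intCast_add_mul {x : ℂ} {κ s N : ℝ} (hκ0 : 0 ≤ κ) (hκ1 : κ ≤ 1)
    (hs : 0 ≤ s) (h : ∀ p q : ℤ, q ≠ 0 → κ * |(q : ℝ)| ^ (-s) < ‖(p : ℂ) + x * (q : ℂ)‖)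
    {p q : ℤ} (hp : |(p : ℝ)| ≤ N) (hq : |(q : ℝ)| ≤ N) (hpq : ¬(p = 0 ∧ q = 0)) :
    κ * N ^ (-s) ≤ ‖(p : ℂ) + x * (q : ℂ)‖ := by
  by_cases hq0 : q = 0
  · have hp0 : p ≠ 0 := fun hp0 => hpq ⟨hp0, hq0⟩
    have hp1 : 1 ≤ |(p : ℝ)| := by exact_mod_cast Int.one_le_abs hp0
    calc κ * N ^ (-s) ≤ N ^ (-s) :=
          mul_le_of_le_one_left (Real.rpow_nonneg (by linarith) _) hκ1
      _ ≤ |(p : ℝ)| ^ (-s) := rpow_neg_le_abs_intCast_rpow_neg hp0 hp hs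
      _ ≤ 1 := Real.rpow_le_one_of_one_le_of_nonpos hp1 (neg_nonpos.mpr hs)
      _ ≤ ‖(p : ℂ) + x * (q : ℂ)‖ := by simpa [hq0] using hp1
  · calc κ * N ^ (-s) ≤ κ * |(q : ℝ)| ^ (-s) :=
          mul_le_mul_of_nonneg_left (rpow_neg_le_abs_intCast_rpow_neg hq0 hq hs) hκ0
      _ ≤ ‖(p : ℂ) + x * (q : ℂ)‖ := (h p q hq0).le

theorem stmt_11_general (f1 f2 : ℂ) (hf1 : f1 ≠ 0) (a : ℝ) (ha : 0 < a) (Q : ℤ)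
    (ε : ℝ) (hε : 0 < ε) (κ : ℝ) (hκ0 : 0 < κ) (hκ1 : κ ≤ 1)
    (h : ∀ p q : ℤ, q ≠ 0 →
      κ * |(q : ℝ)| ^ (-(ε / 2)) < ‖(p : ℂ) + f2 / f1 * (q : ℂ)‖) :
    ∀ u v : ℤ, |u| ≤ 2 * Q → |v| ≤ 2 * Q → ¬(u = 0 ∧ v = 0) →
      κ * a * ‖f1‖ * ((2 * Q : ℤ) : ℝ) ^ (-(ε / 2)) ≤
        ‖(a : ℂ) * f1 * (u : ℂ) + (a : ℂ) * f2 * (v : ℂ)‖ := by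
  intro u v hu hv huv
  have hbound := mul_rpow_neg_le_norm_intCast_add_mul hκ0.le hκ1 (half_pos hε).le h
    (N := ((2 * Q : ℤ) : ℝ)) (by exact_mod_cast hu) (by exact_mod_cast hv) huv
  have hfactor : ‖(a : ℂ) * f1 * (u : ℂ) + (a : ℂ) * f2 * (v : ℂ)‖
      = a * (‖f1‖ * ‖(u : ℂ) + f2 / f1 * (v : ℂ)‖) := by
    rw [mul_assoc, mul_assoc, ← mul_add, norm_mul, Complex.norm_real, Real.norm_of_nonneg ha.le,
      norm_mul_add_mul_eq_norm_mul_norm_add_div_mul hf1]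
  rw [hfactor]
  calc κ * a * ‖f1‖ * ((2 * Q : ℤ) : ℝ) ^ (-(ε / 2))
      = a * (‖f1‖ * (κ * ((2 * Q : ℤ) : ℝ) ^ (-(ε / 2)))) := by ring
    _ ≤ a * (‖f1‖ * ‖(u : ℂ) + f2 / f1 * (v : ℂ)‖) := by gcongr

/-- Minimum-distance bound for the constellation `{f1 U + f2 V : U, V ∈ a{-Q,…,Q}}`:
if `|p + (f2/f1) q| > κ |q|^(-ε/2)` for all integers `p` and nonzero integers `q`, then
every nonzero difference `a f1 u + a f2 v` with `|u|, |v| ≤ 2Q` has modulus at least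
`κ a |f1| (2Q)^(-ε/2)`. -/
theorem stmt_11 (f1 f2 : ℂ) (hf1 : f1 ≠ 0) (a : ℝ) (ha : 0 < a) (Q : ℤ) (hQ : 1 ≤ Q)
    (ε : ℝ) (hε : 0 < ε) (κ : ℝ) (hκ0 : 0 < κ) (hκ1 : κ ≤ 1)
    (h : ∀ p q : ℤ, q ≠ 0 →
      κ * |(q : ℝ)| ^ (-(ε / 2)) < ‖(p : ℂ) + f2 / f1 * (q : ℂ)‖) :
    ∀ u v : ℤ, |u| ≤ 2 * Q → |v| ≤ 2 * Q → ¬(u = 0 ∧ v = 0) →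
      κ * a * ‖f1‖ * ((2 * Q : ℤ) : ℝ) ^ (-(ε / 2)) ≤
        ‖(a : ℂ) * f1 * (u : ℂ) + (a : ℂ) * f2 * (v : ℂ)‖ :=
  stmt_11_general f1 f2 hf1 a ha Q ε hε κ hκ0 hκ1 h
end
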